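/- arXiv:1011.2288 — 3 statements merged into one kernel-verified Lean document; each statement's English description precedes it below -/
import Mathlib

section
/- With d₂ as in the two-sample squared-distance statistic, d₂(A,B) = 2·SST, where SST = n₁(ā − c̄)² + n₂(b̄ − c̄)² and c̄ = (n₁ā + n₂b̄)/(n₁+n₂). That is, the d₂-distance between two univariate samples equals twice the ANOVA between-group sum of squares. -/
/-! Expanding the squares, `g₂(A,B) = mean(a²) + mean(b²) − 2āb̄`, so the combination
`2g₂(A,B) − g₂(A,A) − g₂(B,B)` collapses to `2(ā − b̄)²`, and `d₂(A,B) = 2·n₁n₂/(n₁+n₂)·(ā − b̄)²`.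
On the other side, the between-group sum of squares around the pooled mean `c̄` is the
classical `n₁n₂/(n₁+n₂)·(ā − b̄)²`. -/

open Finset

section MeanSqDist

variable {ι κ : Type*} [Fintype ι] [Fintype κ]

/-- The paper's `g₂(A, B)`. -/
noncomputable def meanSqDist (f : ι → ℝ) (g : κ → ℝ) : ℝ :=
  1 / ((Fintype.card ι : ℝ) * Fintype.card κ) * ∑ i, ∑ m, (f i - g m) ^ 2

lemma sum_sum_sub_sq (f : ι → ℝ) (g : κ → ℝ) :
    ∑ i, ∑ m, (f i - g m) ^ 2
      = Fintype.card κ * ∑ i, f i ^ 2 + Fintype.card ι * ∑ m, g m ^ 2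
        - 2 * (∑ i, f i) * ∑ m, g m := by
  simp only [sub_sq, sum_add_distrib, sum_sub_distrib, sum_const, card_univ, nsmul_eq_mul,
    ← mul_sum, ← sum_mul]
  ring

lemma meanSqDist_eq [Nonempty ι] [Nonempty κ] (f : ι → ℝ) (g : κ → ℝ) :
    meanSqDist f g
      = (∑ i, f i ^ 2) / Fintype.card ι + (∑ m, g m ^ 2) / Fintype.card κ
        - 2 * ((∑ i, f i) / Fintype.card ι) * ((∑ m, g m) / Fintype.card κ) := by
  have hι : (Fintype.card ι : ℝ) ≠ 0 := Nat.cast_ne_zero.mpr Fintype.card_ne_zero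
  have hκ : (Fintype.card κ : ℝ) ≠ 0 := Nat.cast_ne_zero.mpr Fintype.card_ne_zero
  rw [meanSqDist, sum_sum_sub_sq]
  field_simp

lemma two_mul_meanSqDist_sub_meanSqDist_sub_meanSqDist [Nonempty ι] [Nonempty κ]
    (f : ι → ℝ) (g : κ → ℝ) :
    2 * meanSqDist f g - meanSqDist f f - meanSqDist g g
      = 2 * ((∑ i, f i) / Fintype.card ι - (∑ m, g m) / Fintype.card κ) ^ 2 := by
  rw [meanSqDist_eq, meanSqDist_eq, meanSqDist_eq]
  ring

end MeanSqDist

lemma weighted_sq_sub_pooled_mean (p q x y : ℝ) (hpq : p + q ≠ 0) :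
    p * (x - (p * x + q * y) / (p + q)) ^ 2 + q * (y - (p * x + q * y) / (p + q)) ^ 2
      = p * q / (p + q) * (x - y) ^ 2 := by
  field_simp
  ring

/-- The `d₂` distance between two univariate samples equals twice the ANOVA
between-group sum of squares `SST = n₁(ā − c̄)² + n₂(b̄ − c̄)²`. -/
theorem d2_eq_two_SST
    (n₁ n₂ : ℕ) (hn₁ : 1 ≤ n₁) (hn₂ : 1 ≤ n₂)
    (a : Fin n₁ → ℝ) (b : Fin n₂ → ℝ) :
    ((n₁ : ℝ) * n₂ / ((n₁ : ℝ) + n₂)) *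
        (2 * ((1 / ((n₁ : ℝ) * n₂)) * ∑ i : Fin n₁, ∑ m : Fin n₂, (a i - b m) ^ 2)
          - (1 / ((n₁ : ℝ) * n₁)) * ∑ i : Fin n₁, ∑ i' : Fin n₁, (a i - a i') ^ 2
          - (1 / ((n₂ : ℝ) * n₂)) * ∑ m : Fin n₂, ∑ m' : Fin n₂, (b m - b m') ^ 2)
      = 2 * ((n₁ : ℝ) * ((∑ i : Fin n₁, a i) / n₁
              - ((n₁ : ℝ) * ((∑ i : Fin n₁, a i) / n₁)
                  + (n₂ : ℝ) * ((∑ m : Fin n₂, b m) / n₂)) / ((n₁ : ℝ) + n₂)) ^ 2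
            + (n₂ : ℝ) * ((∑ m : Fin n₂, b m) / n₂
              - ((n₁ : ℝ) * ((∑ i : Fin n₁, a i) / n₁)
                  + (n₂ : ℝ) * ((∑ m : Fin n₂, b m) / n₂)) / ((n₁ : ℝ) + n₂)) ^ 2) := by
  have : Nonempty (Fin n₁) := Fin.pos_iff_nonempty.mp hn₁
  have : Nonempty (Fin n₂) := Fin.pos_iff_nonempty.mp hn₂
  have hd₂ := two_mul_meanSqDist_sub_meanSqDist_sub_meanSqDist a b
  simp only [meanSqDist, Fintype.card_fin] at hd₂
  rw [hd₂, weighted_sq_sub_pooled_mean _ _ _ _ (by norm_cast; omega)]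
  ring
end

section
/- Let A₁,…,A_K be finite families of points in ℝ^p with sizes n₁,…,n_K and N = Σ n_j, and fix α ∈ (0,2]. With g_α(A_j,A_k) = (1/(n_j n_k)) Σ_{x∈A_j} Σ_{y∈A_k} ‖x−y‖^α, define T_α = (N/2)·g_α(A,A) for the pooled family A, W_α = Σ_j (n_j/2) g_α(A_j,A_j), and S_α = Σ_{j<k} (n_j n_k/(2N)) (2g_α(A_j,A_k) − g_α(A_j,A_j) − g_α(A_k,A_k)). Then T_α = S_α + W_α. -/
/-!
Let `D j k = ∑ i, ∑ m, ‖A j i - A k m‖ ^ α`. The pooled sum of powered distances splits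
into the blocks `D j k = n j * n k * g_α(A j, A k)` (also for empty families, since their sums
are empty), so `T_α` is the quadratic form `(1 / (2N)) ∑ j k, n j n k g_jk` and the theorem
is an identity about a symmetric matrix `g` with nonnegative weights. The summand
`n j n k (2 g_jk - g_jj - g_kk)` of `S_α` is symmetric and vanishes on the diagonal, so its sum
over `j < k` is half its sum over all pairs, namely `∑ j k, n j n k g_jk - N ∑ j, n j g_jj`;
dividing by `2N` and adding `W_α = (1/2) ∑ j, n j g_jj` gives `T_α`.
-/

open Finset

/-- The Gini mean of `α`-powered Euclidean distances between two finite
families of points. -/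
noncomputable def giniMean {p : ℕ} {ι κ : Type*} [Fintype ι] [Fintype κ] (α : ℝ)
    (A : ι → EuclideanSpace ℝ (Fin p)) (B : κ → EuclideanSpace ℝ (Fin p)) : ℝ :=
  (1 / ((Fintype.card ι : ℝ) * (Fintype.card κ : ℝ))) *
    ∑ i : ι, ∑ m : κ, ‖A i - B m‖ ^ α

theorem Finset.sum_sum_eq_two_nsmul_sum_sum_ite_lt_add_sum_diag {ι M : Type*} [Fintype ι]
    [LinearOrder ι] [AddCommMonoid M] (f : ι → ι → M) (hf : ∀ j k, f j k = f k j) :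
    ∑ j, ∑ k, f j k = 2 • ∑ j, ∑ k, (if j < k then f j k else 0) + ∑ j, f j j := by
  have hsplit (j k : ι) : f j k = (if j < k then f j k else 0) + (if k < j then f k j else 0)
      + (if j = k then f j j else 0) := by
    rcases lt_trichotomy j k with h | rfl | h
    · simp [h, h.not_gt, h.ne]
    · simp
    · simp [h, h.not_gt, h.ne', hf j k]
  simp_rw [two_nsmul, sum_congr rfl fun j _ => sum_congr rfl fun k _ => hsplit j k,
    sum_add_distrib, sum_ite_eq, mem_univ, if_true]
  rw [sum_comm (f := fun j k => if k < j then f k j else 0)]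

theorem sum_sum_mul_mul_two_mul_sub_sub {ι : Type*} [Fintype ι] (w : ι → ℝ) (G : ι → ι → ℝ) :
    ∑ j, ∑ k, w j * w k * (2 * G j k - G j j - G k k)
      = 2 * ∑ j, ∑ k, w j * w k * G j k - 2 * (∑ j, w j) * ∑ j, w j * G j j := by
  have hright : ∑ j, ∑ k, w j * w k * G k k = (∑ j, w j) * ∑ j, w j * G j j := by
    rw [sum_mul_sum]
    simp only [mul_assoc]
  have hleft : ∑ j, ∑ k, w j * w k * G j j = (∑ j, w j) * ∑ j, w j * G j j := by
    rw [← hright, sum_comm]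
    exact sum_congr rfl fun _ _ => sum_congr rfl fun _ _ => by ring
  have hexpand (j k : ι) : w j * w k * (2 * G j k - G j j - G k k)
      = 2 * (w j * w k * G j k) - w j * w k * G j j - w j * w k * G k k := by ring
  simp only [hexpand, sum_sub_distrib, ← mul_sum, hleft, hright]
  ring

theorem weighted_dispersion_decomposition {ι : Type*} [Fintype ι] [LinearOrder ι]
    (w : ι → ℝ) (hw : ∀ j, 0 ≤ w j) (G : ι → ι → ℝ) (hG : ∀ j k, G j k = G k j) :
    ((∑ j, w j) / 2) * (1 / ((∑ j, w j) * ∑ k, w k) * ∑ j, ∑ k, w j * w k * G j k)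
      = (∑ j, ∑ k, if j < k then
            (w j * w k / (2 * ∑ l, w l)) * (2 * G j k - G j j - G k k) else 0)
        + ∑ j, (w j / 2) * G j j := by
  generalize hN : ∑ l, w l = N
  rcases eq_or_ne N 0 with hN0 | hN0
  · have hw0 : ∀ j, w j = 0 := fun j =>
      (sum_eq_zero_iff_of_nonneg fun j _ => hw j).mp (hN.trans hN0) j (mem_univ j)
    simp [hw0]
  have hsplit := sum_sum_eq_two_nsmul_sum_sum_ite_lt_add_sum_diag
    (fun j k => w j * w k * (2 * G j k - G j j - G k k)) (fun j k => by rw [hG j k]; ring)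
  have hbetween : (∑ j, ∑ k, if j < k then
        (w j * w k / (2 * N)) * (2 * G j k - G j j - G k k) else 0)
      = (1 / (2 * N)) * ∑ j, ∑ k,
          if j < k then w j * w k * (2 * G j k - G j j - G k k) else 0 := by
    simp only [mul_sum, mul_ite, mul_zero]
    congr! 3
    ring
  have hwithin : ∑ j, w j / 2 * G j j = (∑ j, w j * G j j) / 2 := by
    rw [sum_div]
    congr! 1 with j
    ring
  have hdiag_zero (j : ι) : w j * w j * (2 * G j j - G j j - G j j) = 0 := by ring
  simp only [two_nsmul, hdiag_zero, sum_const_zero, add_zero,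
    sum_sum_mul_mul_two_mul_sub_sub, hN] at hsplit
  rw [hbetween, hwithin]
  field_simp
  linarith

section

variable {p : ℕ} {ι κ : Type*} [Fintype ι] [Fintype κ] (α : ℝ)

theorem giniMean_comm (A : ι → EuclideanSpace ℝ (Fin p)) (B : κ → EuclideanSpace ℝ (Fin p)) :
    giniMean α A B = giniMean α B A := by
  simp only [giniMean, mul_comm (Fintype.card ι : ℝ), norm_sub_rev (A _)]
  rw [sum_comm]

theorem card_mul_card_mul_giniMean (A : ι → EuclideanSpace ℝ (Fin p))
    (B : κ → EuclideanSpace ℝ (Fin p)) :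
    (Fintype.card ι * Fintype.card κ : ℝ) * giniMean α A B
      = ∑ i, ∑ m, ‖A i - B m‖ ^ α := by
  rcases isEmpty_or_nonempty ι with hι | hι
  · simp
  rcases isEmpty_or_nonempty κ with hκ | hκ
  · simp
  rw [giniMean, ← mul_assoc, mul_one_div_cancel (by positivity), one_mul]

end

theorem giniMean_sigma {p : ℕ} {I J : Type*} [Fintype I] [Fintype J] {ι : I → Type*}
    {κ : J → Type*} [∀ j, Fintype (ι j)] [∀ k, Fintype (κ k)] (α : ℝ)
    (A : (j : I) → ι j → EuclideanSpace ℝ (Fin p))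
    (B : (k : J) → κ k → EuclideanSpace ℝ (Fin p)) :
    giniMean α (fun x : Σ j, ι j => A x.1 x.2) (fun y : Σ k, κ k => B y.1 y.2)
      = 1 / ((∑ j, (Fintype.card (ι j) : ℝ)) * ∑ k, (Fintype.card (κ k) : ℝ)) *
          ∑ j, ∑ k, (Fintype.card (ι j) * Fintype.card (κ k) : ℝ) * giniMean α (A j) (B k) := by
  simp only [card_mul_card_mul_giniMean]
  rw [giniMean, Fintype.card_sigma, Fintype.card_sigma]
  simp only [← univ_sigma_univ, sum_sigma, Nat.cast_sum]
  congr 1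
  exact sum_congr rfl fun j _ => sum_comm

theorem disco_decomposition_general
    (p K : ℕ) (α : ℝ) (n : Fin K → ℕ)
    (A : (j : Fin K) → Fin (n j) → EuclideanSpace ℝ (Fin p)) :
    ((∑ j : Fin K, (n j : ℝ)) / 2) *
        giniMean α (fun ji : Σ j : Fin K, Fin (n j) => A ji.1 ji.2)
          (fun ji : Σ j : Fin K, Fin (n j) => A ji.1 ji.2)
      = (∑ j : Fin K, ∑ k : Fin K,
          if j < k then
            ((n j : ℝ) * (n k : ℝ) / (2 * ∑ l : Fin K, (n l : ℝ))) *
              (2 * giniMean α (A j) (A k) - giniMean α (A j) (A j)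
                - giniMean α (A k) (A k))
          else 0)
        + ∑ j : Fin K, ((n j : ℝ) / 2) * giniMean α (A j) (A j) := by
  rw [giniMean_sigma]
  simpa only [Fintype.card_fin] using
    weighted_dispersion_decomposition (fun j => (n j : ℝ)) (fun j => Nat.cast_nonneg _)
      (fun j k => giniMean α (A j) (A k)) (fun j k => giniMean_comm α (A j) (A k))

/-- DISCO decomposition: total dispersion equals between-sample plus
within-sample dispersion, `T_α = S_α + W_α`, for every index `0 < α ≤ 2`. -/
theorem disco_decomposition
    (p K : ℕ) (α : ℝ) (hα0 : 0 < α) (hα2 : α ≤ 2)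
    (n : Fin K → ℕ) (hn : ∀ j, 1 ≤ n j)
    (A : (j : Fin K) → Fin (n j) → EuclideanSpace ℝ (Fin p)) :
    ((∑ j : Fin K, (n j : ℝ)) / 2) *
        giniMean α (fun ji : Σ j : Fin K, Fin (n j) => A ji.1 ji.2)
          (fun ji : Σ j : Fin K, Fin (n j) => A ji.1 ji.2)
      = (∑ j : Fin K, ∑ k : Fin K,
          if j < k then
            ((n j : ℝ) * (n k : ℝ) / (2 * ∑ l : Fin K, (n l : ℝ))) *
              (2 * giniMean α (A j) (A k) - giniMean α (A j) (A j)
                - giniMean α (A k) (A k))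
          else 0)
        + ∑ j : Fin K, ((n j : ℝ) / 2) * giniMean α (A j) (A j) :=
  disco_decomposition_general p K α n A
end

section
/- For univariate samples A₁,…,A_K, the α = 2 between-sample dispersion equals the ANOVA treatment sum of squares: S₂(A₁,…,A_K) = Σ_{j=1}^K n_j (ā_{·j} − ā_{··})², where ā_{·j} is the mean of sample j and ā_{··} is the grand mean of the pooled sample. -/
open Finset

/-- The Gini mean of squared differences between two finite families of
real numbers. -/
noncomputable def giniMean2 {ι κ : Type*} [Fintype ι] [Fintype κ]
    (A : ι → ℝ) (B : κ → ℝ) : ℝ :=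
  (1 / ((Fintype.card ι : ℝ) * (Fintype.card κ : ℝ))) *
    ∑ i : ι, ∑ m : κ, (A i - B m) ^ 2

/-!
Expanding the squares gives `2 g₂(A, B) - g₂(A, A) - g₂(B, B) = 2 (Ā - B̄)²`, so
`S₂ = (1/N) ∑_{j<k} n_j n_k (ā_j - ā_k)²`. This is the pairwise form of a weighted variance:
with `W = ∑ w_j` and `T = ∑ w_j m_j`, both `∑_{j<k} w_j w_k (m_j - m_k)²` and
`W ∑ w_j (m_j - T/W)²` equal `W ∑ w_j m_j² - T²`.
-/

section WeightedSums

variable {ι R : Type*} [Fintype ι]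

theorem sum_sum_mul_mul_sub_sq [CommRing R] (w m : ι → R) :
    ∑ j, ∑ k, w j * w k * (m j - m k) ^ 2
      = 2 * ((∑ j, w j) * ∑ j, w j * m j ^ 2 - (∑ j, w j * m j) ^ 2) := by
  have row : ∀ j, ∑ k, w j * w k * (m j - m k) ^ 2
      = w j * m j ^ 2 * ∑ k, w k + w j * ∑ k, w k * m k ^ 2
        - 2 * (w j * m j) * ∑ k, w k * m k := by
    intro j
    simp only [mul_sum, ← sum_add_distrib, ← sum_sub_distrib]
    exact sum_congr rfl fun k _ => by ring
  simp only [row, sum_sub_distrib, sum_add_distrib, ← sum_mul, ← mul_sum]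
  ring

theorem two_mul_sum_sum_ite_lt [LinearOrder ι] [CommSemiring R] {f : ι → ι → R}
    (symm : ∀ j k, f j k = f k j) (diag : ∀ j, f j j = 0) :
    2 * ∑ j, ∑ k, (if j < k then f j k else 0) = ∑ j, ∑ k, f j k := by
  have split : ∀ j k, f j k = (if j < k then f j k else 0) + (if k < j then f j k else 0) := by
    intro j k
    rcases lt_trichotomy j k with h | rfl | h
    · simp [h, h.not_gt]
    · simp [diag]
    · simp [h, h.not_gt]
  have lower : ∑ j, ∑ k, (if k < j then f j k else 0)
      = ∑ j, ∑ k, (if j < k then f j k else 0) := by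
    rw [sum_comm]
    simp only [symm]
  rw [two_mul]
  nth_rw 2 [← lower]
  simp only [← sum_add_distrib]
  exact sum_congr rfl fun j _ => sum_congr rfl fun k _ => (split j k).symm

theorem sum_mul_sub_weighted_mean_sq [Field R] (w m : ι → R) (hW : ∑ j, w j ≠ 0) :
    ∑ j, w j * (m j - (∑ k, w k * m k) / ∑ k, w k) ^ 2
      = ((∑ j, w j) * ∑ j, w j * m j ^ 2 - (∑ j, w j * m j) ^ 2) / ∑ j, w j := by
  set W := ∑ k, w k
  set T := ∑ k, w k * m k
  have expand : ∀ j, w j * (m j - T / W) ^ 2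
      = w j * m j ^ 2 - 2 * (T / W) * (w j * m j) + (T / W) ^ 2 * w j := fun j => by ring
  simp only [expand, sum_add_distrib, sum_sub_distrib, ← mul_sum]
  field_simp
  ring

theorem sum_sum_ite_lt_mul_mul_sub_sq [LinearOrder ι] [Field R] [CharZero R] (w m : ι → R) :
    ∑ j, ∑ k, (if j < k then w j * w k * (m j - m k) ^ 2 else 0)
      = (∑ j, w j) * ∑ j, w j * m j ^ 2 - (∑ j, w j * m j) ^ 2 := by
  have h := two_mul_sum_sum_ite_lt (f := fun j k => w j * w k * (m j - m k) ^ 2)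
    (fun j k => by ring) (fun j => by simp)
  rw [sum_sum_mul_mul_sub_sq] at h
  exact mul_left_cancel₀ two_ne_zero h

end WeightedSums

section Gini

variable {ι κ : Type*} [Fintype ι] [Fintype κ] [Nonempty ι] [Nonempty κ]

theorem giniMean2_eq (A : ι → ℝ) (B : κ → ℝ) :
    giniMean2 A B = (∑ i, A i ^ 2) / Fintype.card ι + (∑ m, B m ^ 2) / Fintype.card κ
      - 2 * ((∑ i, A i) / Fintype.card ι) * ((∑ m, B m) / Fintype.card κ) := by
  have row : ∀ i, ∑ m, (A i - B m) ^ 2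
      = Fintype.card κ * A i ^ 2 + ∑ m, B m ^ 2 - 2 * A i * ∑ m, B m := by
    intro i
    simp only [sub_sq, sum_add_distrib, sum_sub_distrib, ← mul_sum, sum_const, card_univ,
      nsmul_eq_mul]
    ring
  simp only [giniMean2, row, sum_add_distrib, sum_sub_distrib, ← mul_sum, ← sum_mul, sum_const,
    card_univ, nsmul_eq_mul]
  field_simp

theorem two_mul_giniMean2_sub_giniMean2_sub_giniMean2 (A : ι → ℝ) (B : κ → ℝ) :
    2 * giniMean2 A B - giniMean2 A A - giniMean2 B B
      = 2 * ((∑ i, A i) / Fintype.card ι - (∑ m, B m) / Fintype.card κ) ^ 2 := by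
  simp only [giniMean2_eq]
  ring

end Gini

/-- For univariate samples, the `α = 2` between-sample dispersion equals the
ANOVA treatment sum of squares `Σ_j n_j(ā_{·j} − ā_{··})²`. -/
theorem between_dispersion_alpha_two_eq_SST
    (K : ℕ) (n : Fin K → ℕ) (hn : ∀ j, 1 ≤ n j)
    (a : (j : Fin K) → Fin (n j) → ℝ) :
    (∑ j : Fin K, ∑ k : Fin K,
        if j < k then
          ((n j : ℝ) * (n k : ℝ) / (2 * ∑ l : Fin K, (n l : ℝ))) *
            (2 * giniMean2 (a j) (a k) - giniMean2 (a j) (a j)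
              - giniMean2 (a k) (a k))
        else 0)
      = ∑ j : Fin K, (n j : ℝ) *
          ((∑ i : Fin (n j), a j i) / (n j : ℝ)
            - (∑ k : Fin K, (n k : ℝ) * ((∑ i : Fin (n k), a k i) / (n k : ℝ)))
                / (∑ l : Fin K, (n l : ℝ))) ^ 2 := by
  rcases isEmpty_or_nonempty (Fin K) with _ | _
  · simp
  have hnonempty : ∀ j, Nonempty (Fin (n j)) := fun j => Fin.pos_iff_nonempty.mp (hn j)
  have hN : ∑ l : Fin K, (n l : ℝ) ≠ 0 :=
    (sum_pos (fun l _ => by exact_mod_cast hn l) univ_nonempty).ne'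
  have pair : ∀ j k, (if j < k then ((n j : ℝ) * n k / (2 * ∑ l : Fin K, (n l : ℝ))) *
      (2 * giniMean2 (a j) (a k) - giniMean2 (a j) (a j) - giniMean2 (a k) (a k)) else 0)
        = (if j < k then (n j : ℝ) * n k *
            ((∑ i, a j i) / n j - (∑ i, a k i) / n k) ^ 2 else 0) / ∑ l : Fin K, (n l : ℝ) := by
    intro j k
    split_ifs
    · rw [two_mul_giniMean2_sub_giniMean2_sub_giniMean2, Fintype.card_fin, Fintype.card_fin]
      field_simp
    · rw [zero_div]
  simp only [pair, ← sum_div]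
  rw [sum_sum_ite_lt_mul_mul_sub_sq, sum_mul_sub_weighted_mean_sq _ _ hN]
end
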